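/- arXiv:1209.6211 — 2 statements merged into one kernel-verified Lean document; each statement's English description precedes it below -/
import Mathlib

section
/- For all complex numbers a and b, every real number ξ, and every r with 0 < r < 1, one has (1/(2πi)) ∮_{|η−i|=r} (a+ηb)/((1+η²)²(ξ−η)) dη = −ia/(4(ξ−i)) − (a+ib)/(4(ξ−i)²). -/
/-!
Since `1 + η² = (η - i)(η + i)`, the integrand is `h η / (η - i)²` with
`h η = (a + η b) / ((η + i)² (ξ - η))` holomorphic on the disc `|η - i| < 1` (its poles `-i`
and `ξ` lie in the closed lower half-plane). Cauchy's formula for the first derivative turns the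
normalised integral into `h'(i)`, which the quotient rule evaluates to the right-hand side.
-/

open Complex Real Metric

theorem Complex.two_pi_I_inv_mul_circleIntegral_div_sub_sq {f : ℂ → ℂ} {c : ℂ} {r : ℝ}
    (hr : 0 < r) (hf : DifferentiableOn ℂ f (closedBall c r)) :
    (1 / (2 * (π : ℂ) * I)) * (∮ z in C(c, r), f z / (z - c) ^ 2) = deriv f c := by
  have cauchy := hf.deriv_eq_smul_circleIntegral hr
  simp only [smul_eq_mul, one_div_mul_eq_div] at cauchy
  rw [one_div_mul_eq_div, cauchy, mul_div_cancel_left₀ _ two_pi_I_ne_zero]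

theorem Complex.im_pos_of_mem_ball_I {z : ℂ} (hz : z ∈ ball I 1) : 0 < z.im := by
  have hdist := (abs_im_le_norm (z - I)).trans_lt (mem_ball_iff_norm.mp hz)
  simp only [sub_im, I_im] at hdist
  linarith [(abs_lt.mp hdist).1]

noncomputable def doublePoleCofactor (a b : ℂ) (ξ : ℝ) (z : ℂ) : ℂ :=
  (a + z * b) / ((z + I) ^ 2 * ((ξ : ℂ) - z))

-- No hypothesis on `z` is needed: with `0⁻¹ = 0`, inversion is multiplicative on all of `ℂ`.
theorem div_one_add_sq_sq_mul_sub_eq (a b : ℂ) (ξ : ℝ) (z : ℂ) :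
    (a + z * b) / ((1 + z ^ 2) ^ 2 * ((ξ : ℂ) - z)) = doublePoleCofactor a b ξ z / (z - I) ^ 2 := by
  have hfactor : 1 + z ^ 2 = (z - I) * (z + I) := by linear_combination I_sq
  rw [doublePoleCofactor, hfactor, div_div, mul_pow]
  ring_nf

theorem differentiableOn_doublePoleCofactor (a b : ℂ) (ξ : ℝ) :
    DifferentiableOn ℂ (doublePoleCofactor a b ξ) (ball I 1) := by
  intro z hz
  have him := im_pos_of_mem_ball_I hz
  have hplus : z + I ≠ 0 := fun h => by
    have := congrArg im h
    simp only [add_im, I_im, zero_im] at this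
    linarith
  have hminus : (ξ : ℂ) - z ≠ 0 := fun h => by
    have := congrArg im h
    simp only [sub_im, ofReal_im, zero_im] at this
    linarith
  have hdiff : DifferentiableAt ℂ (fun z => (a + z * b) / ((z + I) ^ 2 * ((ξ : ℂ) - z))) z :=
    .fun_div (by fun_prop) (by fun_prop) (mul_ne_zero (pow_ne_zero 2 hplus) hminus)
  exact hdiff.differentiableWithinAt

theorem hasDerivAt_doublePoleCofactor_I (a b : ℂ) (ξ : ℝ) :
    HasDerivAt (doublePoleCofactor a b ξ)
      (-I * a / (4 * ((ξ : ℂ) - I)) - (a + I * b) / (4 * ((ξ : ℂ) - I) ^ 2)) I := by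
  have hξ : (ξ : ℂ) - I ≠ 0 := fun h => by simpa using congrArg im h
  have hnum : HasDerivAt (fun z => a + z * b) b I := by
    simpa using ((hasDerivAt_id I).mul_const b).const_add a
  have hden := (((hasDerivAt_id I).add_const I).fun_pow 2).fun_mul
    ((hasDerivAt_id I).const_sub (ξ : ℂ))
  have hden_I : (I + I) ^ 2 * ((ξ : ℂ) - I) = -4 * ((ξ : ℂ) - I) := by
    linear_combination 4 * ((ξ : ℂ) - I) * I_sq
  have hden_ne : (I + I) ^ 2 * ((ξ : ℂ) - I) ≠ 0 := by
    rw [hden_I]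
    exact mul_ne_zero (by norm_num) hξ
  refine (hnum.fun_div hden hden_ne).congr_deriv ?_
  simp only [id, hden_I, Nat.cast_ofNat, Nat.add_one_sub_one, pow_one, mul_one]
  field_simp
  linear_combination (4 * a - 4 * b * ξ + 8 * b * I) * I_sq

/-- For all complex `a`, `b`, every real `ξ` and every `0 < r < 1`,
`(1/(2πi)) ∮_{|η−i|=r} (a+ηb)/((1+η²)²(ξ−η)) dη = −ia/(4(ξ−i)) − (a+ib)/(4(ξ−i)²)`. -/
theorem stmt_11 (a b : ℂ) (ξ : ℝ) (r : ℝ) (hr0 : 0 < r) (hr1 : r < 1) :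
    (1 / (2 * (π : ℂ) * I)) *
        (∮ η in C(I, r), (a + η * b) / ((1 + η ^ 2) ^ 2 * ((ξ : ℂ) - η))) =
      -I * a / (4 * ((ξ : ℂ) - I)) - (a + I * b) / (4 * ((ξ : ℂ) - I) ^ 2) := by
  simp only [div_one_add_sq_sq_mul_sub_eq]
  rw [two_pi_I_inv_mul_circleIntegral_div_sub_sq hr0
    ((differentiableOn_doublePoleCofactor a b ξ).mono (closedBall_subset_ball hr1))]
  exact (hasDerivAt_doublePoleCofactor_I a b ξ).deriv
end

section
/- For all complex numbers a and b, every real number ξ, and every r with 0 < r < 1, one has (1/(2πi)) ∮_{|η−i|=r} (−aη² − 2bη + a)/((1+η²)³(ξ−η)) dη = (1/2)[ a/(4i(ξ−i)) + (a−ib)/(8(ξ−i)²) + (3ξ−7i)(ib−a)/(8(ξ−i)³) ]. -/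
/-!
Since `1 + η² = (η - i)(η + i)`, the integrand is `g(η) / (η - i)³` with
`g(η) = (-aη² - 2bη + a) / ((η + i)³ (ξ - η))`, which is holomorphic on the closed disc because
`-i` and the real point `ξ` lie outside it. Cauchy's integral formula for derivatives turns the
left-hand side into `g''(i) / 2`, and `g''(i)` is computed by applying the quotient rule twice.
-/

open Complex Real Filter Topology Metric

theorem iteratedDeriv_two_div {𝕜 : Type*} [NontriviallyNormedField 𝕜]
    {N D N' D' : 𝕜 → 𝕜} {N'' D'' c : 𝕜}
    (hN : ∀ᶠ x in 𝓝 c, HasDerivAt N (N' x) x) (hD : ∀ᶠ x in 𝓝 c, HasDerivAt D (D' x) x)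
    (hN' : HasDerivAt N' N'' c) (hD' : HasDerivAt D' D'' c) (hc : D c ≠ 0) :
    iteratedDeriv 2 (fun x => N x / D x) c =
      ((N'' * D c - N c * D'') * D c - 2 * D' c * (N' c * D c - N c * D' c)) / D c ^ 3 := by
  have hD_ne : ∀ᶠ x in 𝓝 c, D x ≠ 0 :=
    hD.self_of_nhds.continuousAt.eventually_ne hc
  have hderiv : deriv (fun x => N x / D x) =ᶠ[𝓝 c]
      fun x => (N' x * D x - N x * D' x) / D x ^ 2 := by
    filter_upwards [hN, hD, hD_ne] with x hNx hDx hx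
    exact (hNx.div hDx hx).deriv
  rw [iteratedDeriv_succ, iteratedDeriv_one, hderiv.deriv_eq]
  have hND := hN.self_of_nhds
  have hDD := hD.self_of_nhds
  refine (((hN'.mul hDD).sub (hND.mul hD')).div (hDD.pow 2) (pow_ne_zero 2 hc)).deriv.trans ?_
  simp only [Pi.mul_apply, Pi.sub_apply, Pi.pow_apply]
  field_simp
  ring

theorem im_pos_of_mem_closedBall_I {r : ℝ} (hr : r < 1) {z : ℂ} (hz : z ∈ closedBall I r) :
    0 < z.im := by
  have h := (abs_im_le_norm (z - I)).trans (mem_closedBall_iff_norm.mp hz)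
  rw [sub_im, I_im] at h
  linarith [neg_abs_le (z.im - 1)]

theorem ofReal_sub_I_ne_zero (ξ : ℝ) : (ξ : ℂ) - I ≠ 0 := by
  intro h
  simpa using congrArg im h

noncomputable def regularFactor (a b : ℂ) (ξ : ℝ) (η : ℂ) : ℂ :=
  (-a * η ^ 2 - 2 * b * η + a) / ((η + I) ^ 3 * ((ξ : ℂ) - η))

theorem integrand_eq_smul_regularFactor (a b : ℂ) (ξ : ℝ) (η : ℂ) :
    (-a * η ^ 2 - 2 * b * η + a) / ((1 + η ^ 2) ^ 3 * ((ξ : ℂ) - η)) =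
      (1 / (η - I) ^ (2 + 1)) • regularFactor a b ξ η := by
  have h : 1 + η ^ 2 = (η - I) * (η + I) := by linear_combination I_sq
  simp only [h, regularFactor, smul_eq_mul, div_eq_mul_inv, mul_inv, mul_pow]
  ring

theorem differentiableOn_regularFactor (a b : ℂ) (ξ : ℝ) {r : ℝ} (hr : r < 1) :
    DifferentiableOn ℂ (regularFactor a b ξ) (closedBall I r) := by
  intro η hη
  have him := im_pos_of_mem_closedBall_I hr hη
  have h₁ : η + I ≠ 0 := fun h => by
    have := congrArg im h
    simp only [add_im, I_im, zero_im] at this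
    linarith
  have h₂ : (ξ : ℂ) - η ≠ 0 := fun h => by
    have := congrArg im h
    simp only [sub_im, ofReal_im, zero_im] at this
    linarith
  refine DifferentiableAt.differentiableWithinAt ?_
  exact .div (by fun_prop) (by fun_prop) (mul_ne_zero (pow_ne_zero 3 h₁) h₂)

theorem iteratedDeriv_two_regularFactor (a b : ℂ) (ξ : ℝ) :
    iteratedDeriv 2 (regularFactor a b ξ) I =
      a / (4 * I * ((ξ : ℂ) - I)) + (a - I * b) / (8 * ((ξ : ℂ) - I) ^ 2) +
        (3 * (ξ : ℂ) - 7 * I) * (I * b - a) / (8 * ((ξ : ℂ) - I) ^ 3) := by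
  have hN (η : ℂ) : HasDerivAt (fun η => -a * η ^ 2 - 2 * b * η + a) (-2 * a * η - 2 * b) η :=
    ((((hasDerivAt_pow 2 η).const_mul (-a)).fun_sub
      ((hasDerivAt_id η).const_mul (2 * b))).add_const a).congr_deriv (by norm_num; ring)
  have hD (η : ℂ) : HasDerivAt (fun η => (η + I) ^ 3 * ((ξ : ℂ) - η))
      (3 * (η + I) ^ 2 * ((ξ : ℂ) - η) - (η + I) ^ 3) η :=
    ((((hasDerivAt_id η).add_const I).fun_pow 3).fun_mul
      ((hasDerivAt_id η).const_sub (ξ : ℂ))).congr_deriv (by norm_num; ring)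
  have hN' : HasDerivAt (fun η : ℂ => -2 * a * η - 2 * b) (-2 * a) I :=
    (((hasDerivAt_id I).const_mul (-2 * a)).sub_const (2 * b)).congr_deriv (mul_one _)
  have hD' : HasDerivAt (fun η : ℂ => 3 * (η + I) ^ 2 * ((ξ : ℂ) - η) - (η + I) ^ 3)
      (6 * (I + I) * ((ξ : ℂ) - I) - 6 * (I + I) ^ 2) I := by
    have hshift := (hasDerivAt_id I).add_const I
    exact ((((hshift.fun_pow 2).const_mul 3).fun_mul
      ((hasDerivAt_id I).const_sub (ξ : ℂ))).fun_sub (hshift.fun_pow 3)).congr_deriv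
        (by norm_num; ring)
  have hξ := ofReal_sub_I_ne_zero ξ
  unfold regularFactor
  rw [iteratedDeriv_two_div (.of_forall hN) (.of_forall hD) hN' hD'
    (mul_ne_zero (pow_ne_zero 3 (by simp)) hξ)]
  field_simp
  grind [I_sq]

/-- For all complex `a`, `b`, every real `ξ` and every `0 < r < 1`,
`(1/(2πi)) ∮_{|η−i|=r} (−aη² − 2bη + a)/((1+η²)³(ξ−η)) dη
  = (1/2)[ a/(4i(ξ−i)) + (a−ib)/(8(ξ−i)²) + (3ξ−7i)(ib−a)/(8(ξ−i)³) ]`. -/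
theorem stmt_13 (a b : ℂ) (ξ : ℝ) (r : ℝ) (hr0 : 0 < r) (hr1 : r < 1) :
    (1 / (2 * (π : ℂ) * I)) *
        (∮ η in C(I, r),
          (-a * η ^ 2 - 2 * b * η + a) / ((1 + η ^ 2) ^ 3 * ((ξ : ℂ) - η))) =
      (1 / 2) * (a / (4 * I * ((ξ : ℂ) - I)) +
        (a - I * b) / (8 * ((ξ : ℂ) - I) ^ 2) +
        (3 * (ξ : ℂ) - 7 * I) * (I * b - a) / (8 * ((ξ : ℂ) - I) ^ 3)) := by
  simp_rw [integrand_eq_smul_regularFactor,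
    (differentiableOn_regularFactor a b ξ hr1).circleIntegral_one_div_sub_center_pow_smul hr0,
    iteratedDeriv_two_regularFactor, smul_eq_mul]
  field_simp
  norm_num
end
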